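/- For all real numbers a, b with 0 < a and 0 < b, and a, b < √7, |b·sinh a − a·sinh b| ≥ |a − b| · √((a·cosh a − sinh a)·(b·cosh b − sinh b)). -/

import Mathlib

/-!
Let `H = sinhc'` be the derivative of `sinhc x = sinh x / x`. Since `b sinh a - a sinh b =
a b (sinhc a - sinhc b)` and `x cosh x - sinh x = x² H x`, it suffices to show
`(a - b) √(H a H b) ≤ sinhc a - sinhc b` for `b ≤ a`. On `(0, √7)` the function `H` is convex,
so the left Hermite–Hadamard inequality gives `(a - b) H ((a + b) / 2) ≤ sinhc a - sinhc b`, and it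
is log-concave, so `√(H a H b) ≤ H ((a + b) / 2)`.

By the double-angle formulas, log-concavity `H H'' ≤ H'²` at `x` is the inequality
`(y² + 8) cosh y ≤ 8 y sinh y + 8 - 3 y² - y⁴ / 2` at `y = 2 x`. The difference of the two sides
has Taylor series `y⁶ / 72` minus a series with nonnegative coefficients, so truncating the
series of `sinh` and `cosh` after nine terms proves it for `y² ≤ 28`.
-/

open Real Set Finset Nat

lemma pos_of_hasDerivAt_pos {f f' : ℝ → ℝ} (hf : ∀ x, HasDerivAt f (f' x) x) (h0 : f 0 = 0)
    (hf' : ∀ x, 0 < x → 0 < f' x) {x : ℝ} (hx : 0 < x) : 0 < f x := by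
  have hmono : StrictMonoOn f (Ici 0) :=
    strictMonoOn_of_hasDerivWithinAt_pos (convex_Ici 0)
      (fun y _ ↦ (hf y).continuousAt.continuousWithinAt) (fun y _ ↦ (hf y).hasDerivWithinAt)
      (fun y hy ↦ hf' y (by simpa using hy))
  simpa [h0] using hmono self_mem_Ici hx.le hx

lemma ConvexOn.sub_mul_apply_midpoint_le {F f : ℝ → ℝ} {a b : ℝ} (hab : a ≤ b)
    (hF : ∀ x ∈ Icc a b, HasDerivAt F (f x) x) (hf : ConvexOn ℝ (Icc a b) f) :
    (b - a) * f ((a + b) / 2) ≤ F b - F a := by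
  set m := (a + b) / 2 with hm
  have hmb : m ≤ b := by linarith
  have hA (t : ℝ) (ht : t ∈ Icc m b) :
      HasDerivAt (fun t ↦ F t - F (a + b - t) - (2 * t - (a + b)) * f m)
        (f t + f (a + b - t) - 2 * f m) t := by
    have h1 := hF t ⟨by linarith [ht.1], ht.2⟩
    have h2 := (hF (a + b - t) ⟨by linarith [ht.2], by linarith [ht.1]⟩).comp t
      ((hasDerivAt_id t).const_sub (a + b))
    have h3 := (((hasDerivAt_id t).const_mul 2).sub_const (a + b)).mul_const (f m)
    exact ((h1.sub h2).sub h3).congr_deriv (by ring)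
  have hmono := monotoneOn_of_hasDerivWithinAt_nonneg (convex_Icc m b)
    (fun t ht ↦ (hA t ht).continuousAt.continuousWithinAt)
    (fun t ht ↦ (hA t (interior_subset ht)).hasDerivWithinAt) fun t ht ↦ by
      rw [interior_Icc] at ht
      -- `m` is the midpoint of `t` and its reflection `a + b - t`
      have hmid := hf.2 (x := t) (y := a + b - t) ⟨by linarith [ht.1], ht.2.le⟩
        ⟨by linarith [ht.2], by linarith [ht.1]⟩ (by norm_num : (0 : ℝ) ≤ 1 / 2)
        (by norm_num : (0 : ℝ) ≤ 1 / 2) (by norm_num)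
      simp only [smul_eq_mul, show 1 / 2 * t + 1 / 2 * (a + b - t) = m by ring] at hmid
      linarith
  have := hmono (left_mem_Icc.2 hmb) (right_mem_Icc.2 hmb) hmb
  simp only [show a + b - m = m by ring, show a + b - b = a by ring,
    show 2 * m - (a + b) = 0 by ring, show 2 * b - (a + b) = b - a by ring] at this
  linarith

lemma ConcaveOn.sqrt_mul_le_apply_midpoint {s : Set ℝ} {f : ℝ → ℝ}
    (hf : ConcaveOn ℝ s fun x ↦ log (f x)) (hpos : ∀ x ∈ s, 0 < f x) {a b : ℝ} (ha : a ∈ s)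
    (hb : b ∈ s) : √(f a * f b) ≤ f ((a + b) / 2) := by
  have hmid := hf.2 ha hb (by norm_num : (0 : ℝ) ≤ 1 / 2) (by norm_num : (0 : ℝ) ≤ 1 / 2)
    (by norm_num)
  simp only [smul_eq_mul, show 1 / 2 * a + 1 / 2 * b = (a + b) / 2 by ring] at hmid
  have hm : (a + b) / 2 ∈ s := by
    convert hf.1 ha hb (by norm_num : (0 : ℝ) ≤ 1 / 2) (by norm_num : (0 : ℝ) ≤ 1 / 2)
      (by norm_num) using 1
    simp only [smul_eq_mul]; ring
  have hfa := hpos a ha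
  have hfb := hpos b hb
  have hfm := hpos _ hm
  have hsq : f a * f b ≤ f ((a + b) / 2) ^ 2 := by
    rw [← log_le_log_iff (by positivity) (by positivity), Real.log_mul hfa.ne' hfb.ne',
      Real.log_pow]
    push_cast
    linarith
  calc √(f a * f b) ≤ √(f ((a + b) / 2) ^ 2) := sqrt_le_sqrt hsq
    _ = f ((a + b) / 2) := sqrt_sq hfm.le

lemma concaveOn_log_of_mul_deriv2_le {s : Set ℝ} (hs : Convex ℝ s) (hso : IsOpen s)
    {f f' f'' : ℝ → ℝ} (hpos : ∀ x ∈ s, 0 < f x) (hf : ∀ x ∈ s, HasDerivAt f (f' x) x)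
    (hf' : ∀ x ∈ s, HasDerivAt f' (f'' x) x) (hle : ∀ x ∈ s, f x * f'' x ≤ f' x ^ 2) :
    ConcaveOn ℝ s fun x ↦ log (f x) := by
  refine concaveOn_of_hasDerivWithinAt2_nonpos hs (f' := fun x ↦ f' x / f x)
    (f'' := fun x ↦ (f'' x * f x - f' x * f' x) / f x ^ 2)
    (fun x hx ↦ ((hf x hx).log (hpos x hx).ne').continuousAt.continuousWithinAt)
    (fun x hx ↦ ?_) (fun x hx ↦ ?_) fun x hx ↦ ?_ <;> rw [hso.interior_eq] at hx
  · exact ((hf x hx).log (hpos x hx).ne').hasDerivWithinAt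
  · exact ((hf' x hx).div (hf x hx) (hpos x hx).ne').hasDerivWithinAt
  · exact div_nonpos_of_nonpos_of_nonneg (by nlinarith [hle x hx]) (sq_nonneg _)

lemma sum_sinh_le_sinh {x : ℝ} (hx : 0 ≤ x) (n : ℕ) :
    ∑ k ∈ range n, x ^ (2 * k + 1) / (2 * k + 1)! ≤ sinh x :=
  sum_le_hasSum _ (fun _ _ ↦ by positivity) (hasSum_sinh x)

lemma cosh_le_sum_add_mul_cosh (x : ℝ) (n : ℕ) :
    cosh x ≤ ∑ k ∈ range n, x ^ (2 * k) / (2 * k)! + x ^ (2 * n) / (2 * n)! * cosh x := by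
  have htail := (hasSum_nat_add_iff' n).2 (hasSum_cosh x)
  -- `(2n)! (2k)! ≤ (2n + 2k)!` bounds the tail termwise by `x ^ (2n) / (2n)!` times the series
  have hterm (k : ℕ) : x ^ (2 * (k + n)) / (2 * (k + n))! ≤
      x ^ (2 * n) / (2 * n)! * (x ^ (2 * k) / (2 * k)!) := by
    rw [show 2 * (k + n) = 2 * n + 2 * k by ring, _root_.div_mul_div_comm, ← pow_add]
    gcongr
    · rw [← mul_add]; exact (even_two_mul _).pow_nonneg x
    · exact_mod_cast Nat.le_of_dvd (by positivity) (factorial_mul_factorial_dvd_factorial_add _ _)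
  linarith [hasSum_le hterm htail ((hasSum_cosh x).mul_left _)]

lemma cosh_le_exp_abs (x : ℝ) : cosh x ≤ exp |x| := by
  rw [cosh_eq]
  linarith [exp_le_exp.2 (le_abs_self x), exp_le_exp.2 (neg_le_abs x)]

lemma cosh_le_of_abs_le_six {x : ℝ} (hx : |x| ≤ 6) : cosh x ≤ 729 :=
  calc cosh x ≤ exp |x| := cosh_le_exp_abs x
    _ ≤ exp 1 ^ 6 := by rw [← exp_nat_mul]; exact exp_le_exp.2 (by norm_num; linarith)
    _ ≤ 3 ^ 6 := by gcongr; exact exp_one_lt_three.le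
    _ = 729 := by norm_num

lemma sq_add_eight_mul_cosh_le {y : ℝ} (hy0 : 0 ≤ y) (hy : y ^ 2 ≤ 28) :
    (y ^ 2 + 8) * cosh y ≤ 8 * y * sinh y + 8 - 3 * y ^ 2 - y ^ 4 / 2 := by
  have hs := sum_sinh_le_sinh hy0 9
  have hc := cosh_le_sum_add_mul_cosh y 9
  have hK := cosh_le_of_abs_le_six (x := y) (by rw [abs_of_nonneg hy0]; nlinarith)
  simp only [sum_range_succ, sum_range_zero] at hs hc
  norm_num [Nat.factorial] at hs hc
  have hcosh : cosh y ≤ 1 + y ^ 2 / 2 + y ^ 4 / 24 + y ^ 6 / 720 + y ^ 8 / 40320 +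
      y ^ 10 / 3628800 + y ^ 12 / 479001600 + y ^ 14 / 87178291200 + y ^ 16 / 20922789888000 +
      y ^ 18 / 6402373705728000 * 729 := by
    have : y ^ 18 / 6402373705728000 * cosh y ≤ y ^ 18 / 6402373705728000 * 729 := by gcongr
    linarith
  have h1 := mul_le_mul_of_nonneg_left hcosh (by positivity : 0 ≤ y ^ 2 + 8)
  have h2 := mul_le_mul_of_nonneg_left hs (by positivity : 0 ≤ 8 * y)
  -- the difference of the two polynomial bounds is `y ^ 6 / 72` minus higher even powers
  have hpow (j : ℕ) : y ^ 6 * (y ^ 2) ^ j ≤ y ^ 6 * 28 ^ j := by gcongr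
  nlinarith [hpow 2, hpow 3, hpow 4, hpow 5, hpow 6, hpow 7]

noncomputable def sinhc (x : ℝ) : ℝ := sinh x / x

noncomputable def sinhc' (x : ℝ) : ℝ := (x * cosh x - sinh x) / x ^ 2

noncomputable def sinhc'' (x : ℝ) : ℝ := ((x ^ 2 + 2) * sinh x - 2 * x * cosh x) / x ^ 3

noncomputable def sinhc''' (x : ℝ) : ℝ :=
  ((x ^ 3 + 6 * x) * cosh x - (3 * x ^ 2 + 6) * sinh x) / x ^ 4

lemma hasDerivAt_sinhc {x : ℝ} (hx : x ≠ 0) : HasDerivAt sinhc (sinhc' x) x :=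
  ((hasDerivAt_sinh x).div (hasDerivAt_id' x) hx).congr_deriv (by rw [sinhc']; field_simp)

lemma hasDerivAt_sinhc' {x : ℝ} (hx : x ≠ 0) : HasDerivAt sinhc' (sinhc'' x) x := by
  have h := (((hasDerivAt_id' x).mul (hasDerivAt_cosh x)).sub (hasDerivAt_sinh x)).div
    (hasDerivAt_pow 2 x) (pow_ne_zero 2 hx)
  exact h.congr_deriv (by simp only [sinhc'', Pi.sub_apply, Pi.mul_apply]; field_simp; ring)

lemma hasDerivAt_sinhc'' {x : ℝ} (hx : x ≠ 0) : HasDerivAt sinhc'' (sinhc''' x) x := by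
  have h := ((((hasDerivAt_pow 2 x).add_const 2).mul (hasDerivAt_sinh x)).sub
    (((hasDerivAt_id' x).const_mul 2).mul (hasDerivAt_cosh x))).div
    (hasDerivAt_pow 3 x) (pow_ne_zero 3 hx)
  exact h.congr_deriv (by simp only [sinhc''', Pi.sub_apply, Pi.mul_apply]; field_simp; ring)

lemma mul_cosh_sub_sinh_pos {x : ℝ} (hx : 0 < x) : 0 < x * cosh x - sinh x := by
  refine pos_of_hasDerivAt_pos (f := fun x ↦ x * cosh x - sinh x) (f' := fun x ↦ x * sinh x)
    (fun x ↦ ?_) (by simp) (fun x hx ↦ mul_pos hx (sinh_pos_iff.2 hx)) hx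
  exact (((hasDerivAt_id' x).mul (hasDerivAt_cosh x)).sub (hasDerivAt_sinh x)).congr_deriv
    (by ring)

lemma sinhc'_pos {x : ℝ} (hx : 0 < x) : 0 < sinhc' x :=
  div_pos (mul_cosh_sub_sinh_pos hx) (by positivity)

lemma sinhc'''_pos {x : ℝ} (hx : 0 < x) : 0 < sinhc''' x := by
  refine div_pos (pos_of_hasDerivAt_pos
    (f := fun x ↦ (x ^ 3 + 6 * x) * cosh x - (3 * x ^ 2 + 6) * sinh x)
    (f' := fun x ↦ x ^ 3 * sinh x) (fun x ↦ ?_) (by simp)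
    (fun x hx ↦ mul_pos (by positivity) (sinh_pos_iff.2 hx)) hx) (by positivity)
  have h1 := (((hasDerivAt_pow 3 x).add ((hasDerivAt_id' x).const_mul 6))).mul (hasDerivAt_cosh x)
  have h2 := (((hasDerivAt_pow 2 x).const_mul 3).add_const 6).mul (hasDerivAt_sinh x)
  exact (h1.sub h2).congr_deriv (by simp only [Pi.add_apply]; push_cast; ring)

lemma convexOn_sinhc' : ConvexOn ℝ (Ioi 0) sinhc' := by
  refine convexOn_of_hasDerivWithinAt2_nonneg (convex_Ioi 0) (f' := sinhc'') (f'' := sinhc''')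
    (fun x hx ↦ (hasDerivAt_sinhc' (ne_of_gt hx)).continuousAt.continuousWithinAt)
    (fun x hx ↦ ?_) (fun x hx ↦ ?_) fun x hx ↦ ?_ <;> rw [interior_Ioi] at hx
  · exact (hasDerivAt_sinhc' (ne_of_gt hx)).hasDerivWithinAt
  · exact (hasDerivAt_sinhc'' (ne_of_gt hx)).hasDerivWithinAt
  · exact (sinhc'''_pos hx).le

lemma sinhc'_mul_sinhc'''_le {x : ℝ} (hx : 0 < x) (hx7 : x ^ 2 ≤ 7) :
    sinhc' x * sinhc''' x ≤ sinhc'' x ^ 2 := by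
  have h := sq_add_eight_mul_cosh_le (y := 2 * x) (by positivity) (by nlinarith)
  rw [cosh_two_mul, sinh_two_mul] at h
  have hnum : (x * cosh x - sinh x) * ((x ^ 3 + 6 * x) * cosh x - (3 * x ^ 2 + 6) * sinh x) ≤
      ((x ^ 2 + 2) * sinh x - 2 * x * cosh x) ^ 2 := by
    linear_combination (1 / 8) * h + (x ^ 4 + 3 / 2 * x ^ 2 - 1) * cosh_sq x
  rw [sinhc', sinhc'', sinhc''', _root_.div_mul_div_comm, div_pow, ← pow_add, ← pow_mul]
  exact div_le_div_of_nonneg_right hnum (by positivity)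

lemma concaveOn_log_sinhc' : ConcaveOn ℝ (Ioo 0 √7) fun x ↦ log (sinhc' x) :=
  concaveOn_log_of_mul_deriv2_le (convex_Ioo 0 √7) isOpen_Ioo (fun x hx ↦ sinhc'_pos hx.1)
    (fun x hx ↦ hasDerivAt_sinhc' hx.1.ne') (fun x hx ↦ hasDerivAt_sinhc'' hx.1.ne')
    fun x hx ↦ sinhc'_mul_sinhc'''_le hx.1 ((le_sqrt hx.1.le (by norm_num)).1 hx.2.le)

lemma sub_mul_sqrt_sinhc'_le {a b : ℝ} (hb : 0 < b) (hba : b ≤ a) (ha : a < √7) :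
    (a - b) * √(sinhc' a * sinhc' b) ≤ sinhc a - sinhc b := by
  have hgm := concaveOn_log_sinhc'.sqrt_mul_le_apply_midpoint (fun x hx ↦ sinhc'_pos hx.1)
    ⟨hb, hba.trans_lt ha⟩ ⟨hb.trans_le hba, ha⟩
  have hhadamard := (convexOn_sinhc'.subset (fun x hx ↦ hb.trans_le hx.1)
    (convex_Icc b a)).sub_mul_apply_midpoint_le hba
      fun x hx ↦ hasDerivAt_sinhc (hb.trans_le hx.1).ne'
  calc (a - b) * √(sinhc' a * sinhc' b) ≤ (a - b) * sinhc' ((b + a) / 2) := by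
        rw [mul_comm (sinhc' a)]; exact mul_le_mul_of_nonneg_left hgm (sub_nonneg.2 hba)
    _ ≤ sinhc a - sinhc b := hhadamard

theorem vanDerCorput_sinh_half (a b : ℝ) (ha : 0 < a) (hb : 0 < b)
    (ha7 : a < Real.sqrt 7) (hb7 : b < Real.sqrt 7) :
    |b * Real.sinh a - a * Real.sinh b| ≥
      |a - b| * Real.sqrt ((a * Real.cosh a - Real.sinh a) * (b * Real.cosh b - Real.sinh b)) := by
  wlog hba : b ≤ a generalizing a b
  · have h := this b a hb ha hb7 ha7 (le_of_not_ge hba)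
    rwa [abs_sub_comm b a, abs_sub_comm (a * sinh b), mul_comm (b * cosh b - _)] at h
  have hN (x : ℝ) (hx : 0 < x) : x * cosh x - sinh x = x ^ 2 * sinhc' x := by
    rw [sinhc']; field_simp
  have hlhs : b * sinh a - a * sinh b = a * b * (sinhc a - sinhc b) := by
    rw [sinhc, sinhc]; field_simp
  rw [hN a ha, hN b hb, show a ^ 2 * sinhc' a * (b ^ 2 * sinhc' b) =
    (a * b) ^ 2 * (sinhc' a * sinhc' b) by ring, sqrt_mul (by positivity), sqrt_sq (by positivity),
    abs_of_nonneg (sub_nonneg.2 hba), hlhs]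
  calc (a - b) * (a * b * √(sinhc' a * sinhc' b))
      = a * b * ((a - b) * √(sinhc' a * sinhc' b)) := by ring
    _ ≤ a * b * (sinhc a - sinhc b) :=
      mul_le_mul_of_nonneg_left (sub_mul_sqrt_sinhc'_le hb hba ha7) (by positivity)
    _ ≤ |a * b * (sinhc a - sinhc b)| := le_abs_self _
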